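/- Let Q be a sub-rate matrix and let A ⊆ B be subsets of ι. Then for every real t ≥ 0, every x : ι, and every y ∈ A, (Matrix.exp ℝ (t • Q_A)) x y ≤ (Matrix.exp ℝ (t • Q_B)) x y. In particular (taking B = Set.univ, so Q_B = Q) the truncated semigroup bounds the full semigroup from below on A. (Finite-state core of Theorem 2.5(i) and Theorem 1.1(i) of the paper: truncations yield an increasing family of lower bounds.) -/

import Mathlib

/-!
Adding `c • 1` with `c ≥ -Q x x` for all `x` makes `Q_A + c` and `Q_B + c` entrywise nonnegative and
only rescales the semigroups by `e^{-tc}`, so it suffices to compare the exponential series of the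
shifted matrices term by term. Their rows indexed by `A` coincide, and `Q_A + c` has no entry
leading from outside `A` into `A` (it is block triangular for the partition `Aᶜ`, `A`), so no power
of it does either; induction on `n` then gives `((Q_A + c) ^ n) x y ≤ ((Q_B + c) ^ n) x y` for
`y ∈ A`.
-/

/-- Mathlib's exponential, specialized to real matrices (`Matrix.exp ℝ`). -/
noncomputable def Matrix.exp (𝕂 : Type*) [Field 𝕂] {ι : Type*} [Fintype ι] [DecidableEq ι]
    [Algebra 𝕂 ℝ] (A : Matrix ι ι ℝ) : Matrix ι ι ℝ :=
  (NormedSpace.expSeries 𝕂 (Matrix ι ι ℝ)).sum A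

open Classical in
/-- The truncation `Q_A` of `Q` to `A`: every state outside `A` is made absorbing. -/
noncomputable def Matrix.truncation {ι : Type*} (Q : Matrix ι ι ℝ) (A : Set ι) :
    Matrix ι ι ℝ :=
  Matrix.of fun x y => if x ∈ A then Q x y else 0

namespace Matrix

variable {ι : Type*}

def IsMetzler (M : Matrix ι ι ℝ) : Prop :=
  ∀ i j, i ≠ j → 0 ≤ M i j

theorem blockTriangular_notMem_iff {M : Matrix ι ι ℝ} {A : Set ι} :
    M.BlockTriangular (· ∉ A) ↔ ∀ i ∉ A, ∀ j ∈ A, M i j = 0 :=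
  ⟨fun h _ hi _ hj => h (lt_of_le_not_ge (fun _ => hi) fun h' => h' hi hj),
    fun h i j hij => h i (fun hi => hij.not_ge fun hi' => absurd hi hi') j
      (not_not.mp fun hj => hij.not_ge fun _ => hj)⟩

theorem truncation_apply_of_mem (Q : Matrix ι ι ℝ) {A : Set ι} {i : ι} (hi : i ∈ A) (j : ι) :
    Q.truncation A i j = Q i j := by
  simp [truncation, hi]

theorem truncation_apply_of_notMem (Q : Matrix ι ι ℝ) {A : Set ι} {i : ι} (hi : i ∉ A) (j : ι) :
    Q.truncation A i j = 0 := by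
  simp [truncation, hi]

theorem IsMetzler.truncation {Q : Matrix ι ι ℝ} (hQ : Q.IsMetzler) (A : Set ι) :
    (Q.truncation A).IsMetzler := by
  intro i j hij
  by_cases hi : i ∈ A
  · exact (Q.truncation_apply_of_mem hi j).symm ▸ hQ i j hij
  · exact (Q.truncation_apply_of_notMem hi j).ge

theorem blockTriangular_truncation (Q : Matrix ι ι ℝ) (A : Set ι) :
    (Q.truncation A).BlockTriangular (· ∉ A) :=
  blockTriangular_notMem_iff.mpr fun _ hi j _ => Q.truncation_apply_of_notMem hi j

variable [DecidableEq ι]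

theorem IsMetzler.add_smul_one_nonneg {X : Matrix ι ι ℝ} (hX : X.IsMetzler) {c : ℝ}
    (hc : ∀ i, -X i i ≤ c) (i j : ι) : 0 ≤ (X + c • 1) i j := by
  rcases eq_or_ne i j with rfl | hij
  · simpa using neg_le_iff_add_nonneg'.mp (hc i)
  · simpa [one_apply_ne hij] using hX i j hij

variable [Fintype ι]

theorem pow_apply_le_pow_apply {M N : Matrix ι ι ℝ} {A : Set ι} (hM : ∀ i j, 0 ≤ M i j)
    (hN : ∀ i j, 0 ≤ N i j) (hMN : ∀ i ∈ A, ∀ j, M i j ≤ N i j)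
    (hMA : M.BlockTriangular (· ∉ A)) (n : ℕ) (i : ι) {j : ι} (hj : j ∈ A) :
    (M ^ n) i j ≤ (N ^ n) i j := by
  induction n generalizing i with
  | zero => rfl
  | succ n ih =>
    by_cases hi : i ∈ A
    · rw [pow_succ', pow_succ', mul_apply, mul_apply]
      exact Finset.sum_le_sum fun k _ =>
        mul_le_mul (hMN i hi k) (ih k) (pow_apply_nonneg hM n k j) (hN i k)
    · rw [blockTriangular_notMem_iff.mp (hMA.pow (n + 1)) i hi j hj]
      exact pow_apply_nonneg hN (n + 1) i j

theorem exp_eq_normedSpace_exp (X : Matrix ι ι ℝ) : Matrix.exp ℝ X = NormedSpace.exp X :=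
  (congrFun (NormedSpace.exp_eq_expSeries_sum ℝ) X).symm

open scoped Nat Matrix.Norms.Operator in
theorem hasSum_exp_apply (X : Matrix ι ι ℝ) (i j : ι) :
    HasSum (fun n => (n ! : ℝ)⁻¹ * (X ^ n) i j) (NormedSpace.exp X i j) :=
  Pi.hasSum.mp (Pi.hasSum.mp (NormedSpace.exp_series_hasSum_exp' (𝕂 := ℝ) X) i) j

theorem exp_apply_le_exp_apply {X Y : Matrix ι ι ℝ} {i j : ι}
    (h : ∀ n : ℕ, (X ^ n) i j ≤ (Y ^ n) i j) :
    NormedSpace.exp X i j ≤ NormedSpace.exp Y i j :=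
  hasSum_le (fun n => mul_le_mul_of_nonneg_left (h n) (by positivity))
    (hasSum_exp_apply X i j) (hasSum_exp_apply Y i j)

open scoped Matrix.Norms.Operator in
theorem exp_add_smul_one (X : Matrix ι ι ℝ) (r : ℝ) :
    NormedSpace.exp (X + r • 1) = Real.exp r • NormedSpace.exp X := by
  have hscalar : NormedSpace.exp (r • 1 : Matrix ι ι ℝ) = Real.exp r • 1 := by
    rw [← Algebra.algebraMap_eq_smul_one, ← Algebra.algebraMap_eq_smul_one, Real.exp_eq_exp_ℝ]
    exact (NormedSpace.algebraMap_exp_comm r).symm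
  rw [exp_add_of_commute _ _ ((Commute.one_right X).smul_right r), hscalar, mul_smul_one]

theorem IsMetzler.exp_smul_apply_le {X Y : Matrix ι ι ℝ} {A : Set ι} (hX : X.IsMetzler)
    (hY : Y.IsMetzler) (hXY : ∀ i ∈ A, ∀ j, X i j ≤ Y i j)
    (hXA : X.BlockTriangular (· ∉ A)) {t : ℝ} (ht : 0 ≤ t) (i : ι) {j : ι} (hj : j ∈ A) :
    NormedSpace.exp (t • X) i j ≤ NormedSpace.exp (t • Y) i j := by
  obtain ⟨c, hc⟩ := Finite.exists_le fun k => max (-X k k) (-Y k k)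
  have hM : ∀ k l, 0 ≤ (X + c • 1) k l :=
    hX.add_smul_one_nonneg fun k => (le_max_left _ _).trans (hc k)
  have hN : ∀ k l, 0 ≤ (Y + c • 1) k l :=
    hY.add_smul_one_nonneg fun k => (le_max_right _ _).trans (hc k)
  have hMN : ∀ k ∈ A, ∀ l, (X + c • 1) k l ≤ (Y + c • 1) k l := fun k hk l => by
    simpa only [add_apply] using add_le_add_left (hXY k hk l) _
  have hMA : (X + c • 1).BlockTriangular (· ∉ A) := hXA.add <| by
    simpa only [Algebra.algebraMap_eq_smul_one] using blockTriangular_algebraMap c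
  have hshift : ∀ Z : Matrix ι ι ℝ,
      NormedSpace.exp (t • Z) = Real.exp (-(t * c)) • NormedSpace.exp (t • (Z + c • 1)) := by
    intro Z
    rw [← exp_add_smul_one]
    congr 1
    module
  rw [hshift X, hshift Y, smul_apply, smul_apply, smul_eq_mul, smul_eq_mul]
  refine mul_le_mul_of_nonneg_left (exp_apply_le_exp_apply fun n => ?_) (Real.exp_pos _).le
  rw [smul_pow, smul_pow, smul_apply, smul_apply, smul_eq_mul, smul_eq_mul]
  exact mul_le_mul_of_nonneg_left (pow_apply_le_pow_apply hM hN hMN hMA n i hj) (pow_nonneg ht n)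

end Matrix

theorem matrix_exp_truncation_monotone_general {ι : Type*} [Fintype ι] [DecidableEq ι]
    (Q : Matrix ι ι ℝ) (hMetzler : ∀ x y, x ≠ y → Q x y ≥ 0)
    (A B : Set ι) (hAB : A ⊆ B) :
    ∀ t : ℝ, 0 ≤ t → ∀ x : ι, ∀ y ∈ A,
      Matrix.exp ℝ (t • Q.truncation A) x y ≤ Matrix.exp ℝ (t • Q.truncation B) x y := by
  intro t ht x y hy
  simp only [Matrix.exp_eq_normedSpace_exp]
  refine Matrix.IsMetzler.exp_smul_apply_le (Matrix.IsMetzler.truncation hMetzler A)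
    (Matrix.IsMetzler.truncation hMetzler B)
    (fun i hi j => ?_) (Q.blockTriangular_truncation A) ht x hy
  rw [Q.truncation_apply_of_mem hi, Q.truncation_apply_of_mem (hAB hi)]

/-- For a sub-rate matrix `Q` and truncations `A ⊆ B`, the truncated semigroup of `Q_A`
bounds that of `Q_B` from below on `A` (taking `B = Set.univ`, so that `Q_B = Q`, the
truncated semigroup bounds the full semigroup from below on `A`). -/
theorem matrix_exp_truncation_monotone {ι : Type*} [Fintype ι] [DecidableEq ι] [Nonempty ι]
    (Q : Matrix ι ι ℝ) (hMetzler : ∀ x y, x ≠ y → Q x y ≥ 0)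
    (hrow : ∀ x, ∑ y, Q x y ≤ 0) (A B : Set ι) (hAB : A ⊆ B) :
    ∀ t : ℝ, 0 ≤ t → ∀ x : ι, ∀ y ∈ A,
      Matrix.exp ℝ (t • Q.truncation A) x y ≤ Matrix.exp ℝ (t • Q.truncation B) x y :=
  matrix_exp_truncation_monotone_general Q hMetzler A B hAB
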